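/- arXiv:1905.02866 — 6 statements merged into one kernel-verified Lean document; each statement's English description precedes it below -/
import Mathlib

section
/- Let ω > 0 and c ∈ ℝ with c² < 4ω. Then the squared L² norm of the bright-soliton profile is given exactly by ∫_ℝ φ_{ω,c}(y)² dy = 8·arctan( √( (2√ω + c)/(2√ω − c) ) ). -/
open MeasureTheory Real Filter Set Topology

lemma hasDerivAt_tanh_aux (x : ℝ) :
    HasDerivAt (fun x => Real.sinh x / Real.cosh x) (1 / Real.cosh x ^ 2) x := by
  have h := (Real.hasDerivAt_sinh x).div (Real.hasDerivAt_cosh x) (Real.cosh_pos x).ne'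
  refine HasDerivAt.congr_deriv h ?_
  have h2 := Real.cosh_sq_sub_sinh_sq x
  rw [div_left_inj' (pow_ne_zero 2 (Real.cosh_pos x).ne')]
  nlinarith [h2]

lemma tendsto_tanh_aux_top :
    Tendsto (fun x => Real.sinh x / Real.cosh x) atTop (𝓝 1) := by
  have heq : ∀ x : ℝ, Real.sinh x / Real.cosh x
      = (1 - Real.exp (-(2*x))) / (1 + Real.exp (-(2*x))) := by
    intro x
    have h1 : Real.exp x ≠ 0 := (Real.exp_pos x).ne'
    have h2 : Real.exp (-(2*x)) = Real.exp (-x) * Real.exp (-x) := by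
      rw [← Real.exp_add]; ring_nf
    have h3 : (0:ℝ) < 1 + Real.exp (-(2*x)) := by positivity
    rw [Real.sinh_eq, Real.cosh_eq]
    have h4 : Real.exp (-x) * Real.exp x = 1 := by rw [← Real.exp_add]; simp
    have h5 : Real.exp x * Real.exp (-(x*2)) = Real.exp (-x) := by
      rw [← Real.exp_add]; ring_nf
    field_simp
    linear_combination (2:ℝ) * h5
  have hexp : Tendsto (fun x : ℝ => Real.exp (-(2*x))) atTop (𝓝 0) := by
    apply Real.tendsto_exp_atBot.comp
    have h := (tendsto_id (α := ℝ)).const_mul_atTop (two_pos)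
    exact tendsto_neg_atBot_iff.mpr h
  have h := ((tendsto_const_nhds (x := (1:ℝ))).sub hexp).div
    ((tendsto_const_nhds (x := (1:ℝ))).add hexp) (by norm_num)
  simp only [sub_zero, add_zero, div_one] at h
  exact (Filter.Tendsto.congr (fun x => (heq x).symm)) h

lemma tendsto_tanh_aux_bot :
    Tendsto (fun x => Real.sinh x / Real.cosh x) atBot (𝓝 (-1)) := by
  have h1 : Tendsto (fun x : ℝ => -x) atBot atTop := tendsto_neg_atBot_atTop
  have h2 := (tendsto_tanh_aux_top.comp h1).neg
  simp only [Function.comp] at h2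
  refine Filter.Tendsto.congr (fun x => ?_) h2
  rw [Real.sinh_neg, Real.cosh_neg]
  ring

set_option maxHeartbeats 1000000 in
/-- The squared `L²` norm of the bright-soliton profile equals
`8 · arctan √((2√ω + c)/(2√ω − c))`. -/
theorem dnls_soliton_L2_norm (ω c : ℝ) (hω : 0 < ω) (hc : c ^ 2 < 4 * ω) :
    let φ : ℝ → ℝ := fun y =>
      Real.sqrt ((4 * ω - c ^ 2) /
        (Real.sqrt ω * (Real.cosh (Real.sqrt (4 * ω - c ^ 2) * y) - c / (2 * Real.sqrt ω))))
    (∫ y : ℝ, (φ y) ^ 2) =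
      8 * Real.arctan (Real.sqrt ((2 * Real.sqrt ω + c) / (2 * Real.sqrt ω - c))) := by
  intro φ
  set s : ℝ := Real.sqrt ω with hs
  set k : ℝ := Real.sqrt (4 * ω - c ^ 2) with hkdef
  have hs0 : 0 < s := Real.sqrt_pos.mpr hω
  have hs2 : s ^ 2 = ω := Real.sq_sqrt hω.le
  have hk0 : 0 < k := Real.sqrt_pos.mpr (by linarith)
  have hk2 : k ^ 2 = 4 * ω - c ^ 2 := Real.sq_sqrt (by linarith)
  have hcs : c < 2 * s := by nlinarith
  have hcs' : -(2 * s) < c := by nlinarith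
  set B : ℝ := k / (2 * s - c) with hBdef
  have hB0 : 0 < B := div_pos hk0 (by linarith)
  have hBk : B * (2 * s - c) = k := div_mul_cancel₀ k (by linarith)
  -- the square root in the statement equals B
  have hsqrtB : Real.sqrt ((2 * s + c) / (2 * s - c)) = B := by
    have h1 : (2 * s + c) / (2 * s - c) = B ^ 2 := by
      rw [hBdef, div_pow, hk2]
      rw [div_eq_div_iff (by linarith : (0:ℝ) < 2*s-c).ne' (pow_pos (by linarith : (0:ℝ) < 2*s-c) 2).ne']
      nlinarith [hs2]
    rw [h1, Real.sqrt_sq hB0.le]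
  -- the antiderivative
  set F : ℝ → ℝ := fun y =>
    4 * Real.arctan (B * (Real.sinh (k / 2 * y) / Real.cosh (k / 2 * y))) with hF
  -- pointwise formula for φ² and positivity of the denominator
  have hden : ∀ y : ℝ, 0 < s * (Real.cosh (k * y) - c / (2 * s)) := by
    intro y
    have h1 := Real.one_le_cosh (k * y)
    have h2 : c / (2 * s) < 1 := (div_lt_one (by linarith)).mpr hcs
    nlinarith
  have hφ : ∀ y : ℝ, φ y ^ 2
      = (4 * ω - c ^ 2) / (s * (Real.cosh (k * y) - c / (2 * s))) := by
    intro y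
    exact Real.sq_sqrt (div_nonneg (by nlinarith) (hden y).le)
  -- derivative of F is φ²
  have hder : ∀ y : ℝ, HasDerivAt F (φ y ^ 2) y := by
    intro y
    set v : ℝ := k / 2 * y with hv
    have h1 : HasDerivAt (fun y : ℝ => k / 2 * y) (k / 2) y := by
      simpa using (hasDerivAt_id y).const_mul (k / 2)
    have h2 := (hasDerivAt_tanh_aux v).comp y h1
    have h3 := h2.const_mul B
    have h4 := (Real.hasDerivAt_arctan (B * (Real.sinh v / Real.cosh v))).comp y h3
    have h5 := h4.const_mul 4
    have heq : φ y ^ 2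
        = 4 * (1 / (1 + (B * (Real.sinh v / Real.cosh v)) ^ 2) * (B * (1 / Real.cosh v ^ 2 * (k / 2)))) := by
      rw [hφ y]
      have hky : k * y = 2 * v := by rw [hv]; ring
      rw [hky, Real.cosh_two_mul]
      set X : ℝ := Real.cosh v with hX
      set S : ℝ := Real.sinh v with hS
      have hX0 : 0 < X := Real.cosh_pos v
      have hXS : X ^ 2 - S ^ 2 = 1 := Real.cosh_sq_sub_sinh_sq v
      have hd2' : 0 < s * (X ^ 2 + S ^ 2 - c / (2 * s)) := by
        have := hden y; rwa [hky, Real.cosh_two_mul] at this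
      have hB2 : B ^ 2 * (2 * s - c) = 2 * s + c := by
        have h6 : B ^ 2 * (2 * s - c) ^ 2 = k ^ 2 := by rw [← hBk]; ring
        have h7 : (0:ℝ) < 2 * s - c := by linarith
        nlinarith [h6, hk2, hs2]
      have e1 : 1 + (B * (S / X)) ^ 2 = (X ^ 2 + (B * S) ^ 2) / X ^ 2 := by
        field_simp
      have hpos : (0:ℝ) < X ^ 2 + (B * S) ^ 2 := by positivity
      rw [e1]
      have e2 : 4 * (1 / ((X ^ 2 + (B * S) ^ 2) / X ^ 2) * (B * (1 / X ^ 2 * (k / 2))))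
          = 2 * k * B / (X ^ 2 + (B * S) ^ 2) := by
        field_simp; ring
      rw [e2, div_eq_div_iff hd2'.ne' hpos.ne']
      have e3 : s * (X ^ 2 + S ^ 2 - c / (2 * s)) = s * (X ^ 2 + S ^ 2) - c / 2 := by
        field_simp
      rw [e3]
      linear_combination (-(X ^ 2 + (B * S) ^ 2)) * hk2 + (-(k * B * c)) * hXS
        + (-(k * X ^ 2) - k * B ^ 2 * S ^ 2) * hBk + (k * B * S ^ 2) * hB2
    rw [heq]
    exact h5
  -- limits of F at ±∞
  have hkv : Tendsto (fun y : ℝ => k / 2 * y) atTop atTop :=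
    (tendsto_id (α := ℝ)).const_mul_atTop (by positivity)
  have hkv' : Tendsto (fun y : ℝ => k / 2 * y) atBot atBot := by
    exact (tendsto_id (α := ℝ)).const_mul_atBot (by positivity)
  have htop : Tendsto F atTop (𝓝 (4 * Real.arctan B)) := by
    have h1 := tendsto_tanh_aux_top.comp hkv
    have h2 := ((tendsto_const_nhds (x := B)).mul h1)
    have h3 := ((Real.continuous_arctan.tendsto (B * 1)).comp h2).const_mul 4
    simpa [Function.comp] using h3
  have hbot : Tendsto F atBot (𝓝 (-(4 * Real.arctan B))) := by
    have h1 := tendsto_tanh_aux_bot.comp hkv'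
    have h2 := ((tendsto_const_nhds (x := B)).mul h1)
    have h3 := ((Real.continuous_arctan.tendsto (B * (-1))).comp h2).const_mul 4
    simpa [Function.comp, Real.arctan_neg] using h3
  -- integrability of φ²
  have hIoi : IntegrableOn (fun y => φ y ^ 2) (Ioi 0) :=
    integrableOn_Ioi_deriv_of_nonneg' (fun x _ => hder x) (fun x _ => sq_nonneg _) htop
  have hIci : IntegrableOn (fun y => φ y ^ 2) (Ici 0) :=
    Iff.mpr integrableOn_Ici_iff_integrableOn_Ioi hIoi
  have heven : ∀ y : ℝ, φ (-y) ^ 2 = φ y ^ 2 := by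
    intro y
    simp only [φ, mul_neg, Real.cosh_neg]
  have hIic : IntegrableOn (fun y => φ y ^ 2) (Iic 0) := by
    have h_map_neg : ((volume : Measure ℝ).restrict (Ici 0)).map Neg.neg
        = (volume : Measure ℝ).restrict (Iic 0) := by
      conv_rhs => rw [← Measure.map_neg_eq_self (volume : Measure ℝ),
        measurableEmbedding_neg.restrict_map]
      simp
    rw [IntegrableOn, ← h_map_neg, measurableEmbedding_neg.integrable_map_iff]
    have : ((fun y => φ y ^ 2) ∘ Neg.neg) = fun y => φ y ^ 2 := funext fun y => heven y
    rw [this]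
    exact hIci
  have hint : Integrable (fun y => φ y ^ 2) := by
    rw [← integrableOn_univ, ← Set.Iic_union_Ioi (a := (0:ℝ)), integrableOn_union]
    exact ⟨hIic, hIoi⟩
  rw [integral_of_hasDerivAt_of_tendsto hder hint hbot htop, hsqrtB]
  ring
end

section
/- Let ω > 0. For every c ∈ ℝ with c² < 4ω one has the strict bound ∫_ℝ φ_{ω,c}(y)² dy < 4π, and the bound is sharp: as c tends to 2√ω from the left, ∫_ℝ φ_{ω,c}(y)² dy tends to 4π. -/
open MeasureTheory Filter

private lemma deriv_identity (s c k b C S : ℝ) (hs : 0 < s) (h2sc : 0 < 2*s - c)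
    (hC : 0 < C) (hCS : C^2 - S^2 = 1)
    (hb2 : b^2 * (2*s - c) = 2*s + c) (hbk : b * k = 2*s + c) :
    4 * (1 / (1 + (b * (S / C)) ^ 2) * (b * (k / 2 / C ^ 2)))
      = (4*s^2 - c^2) / (s * (C^2 + S^2 - c / (2*s))) := by
  have hD : 0 < C^2 + b^2 * S^2 := by positivity
  set D := C^2 + b^2 * S^2 with hD_def
  have step1 : 1 + (b * (S / C)) ^ 2 = D / C^2 := by
    rw [hD_def]; field_simp
  have step2 : 4 * (1 / (1 + (b * (S / C)) ^ 2) * (b * (k / 2 / C ^ 2)))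
      = 2 * (b * k) / D := by
    rw [step1]; field_simp; ring
  have hsc : s * (c / (2*s)) = c / 2 := by
    field_simp
  have step3 : s * (C^2 + S^2 - c / (2*s)) = (2*s - c) * D / 2 := by
    rw [mul_sub, hsc, hD_def]
    linear_combination (-S^2/2) * hb2 + (c/2) * hCS
  rw [step2, step3, hbk]
  have h4 : 4*s^2 - c^2 = (2*s - c) * (2*s + c) := by ring
  rw [h4]
  field_simp

private lemma tanh_lim : Tendsto (fun x : ℝ => Real.sinh x / Real.cosh x) atTop (nhds 1) := by
  have h : ∀ x : ℝ, Real.sinh x / Real.cosh x = 1 - 2 / (Real.exp (2 * x) + 1) := by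
    intro x
    have he : (0:ℝ) < Real.exp x := Real.exp_pos x
    have h2 : Real.exp (2 * x) = Real.exp x * Real.exp x := by
      rw [two_mul, Real.exp_add]
    have hpos : Real.exp x * Real.exp x + 1 ≠ 0 := by positivity
    have hc : Real.exp x + Real.exp (-x) ≠ 0 := by positivity
    rw [Real.sinh_eq, Real.cosh_eq, h2, Real.exp_neg]
    field_simp
    ring
  simp_rw [h]
  have h1 : Tendsto (fun x : ℝ => 2 / (Real.exp (2 * x) + 1)) atTop (nhds 0) := by
    apply Tendsto.div_atTop tendsto_const_nhds
    exact (Real.tendsto_exp_atTop.comp (tendsto_id.const_mul_atTop two_pos)).atTop_add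
      tendsto_const_nhds
  have := tendsto_const_nhds (α := ℝ) (x := (1:ℝ)) (f := atTop) |>.sub h1
  simpa using this

private lemma mass_formula (ω : ℝ) (hω : 0 < ω) (c : ℝ) (hc : c ^ 2 < 4 * ω) :
    (∫ y : ℝ, (Real.sqrt ((4 * ω - c ^ 2) /
        (Real.sqrt ω * (Real.cosh (Real.sqrt (4 * ω - c ^ 2) * y) - c / (2 * Real.sqrt ω))))) ^ 2)
      = 8 * Real.arctan (Real.sqrt ((2 * Real.sqrt ω + c) / (2 * Real.sqrt ω - c))) := by
  set s := Real.sqrt ω with hs_def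
  have hs : 0 < s := Real.sqrt_pos.mpr hω
  have hs2 : s ^ 2 = ω := Real.sq_sqrt hω.le
  have hcu : c < 2 * s := by nlinarith [sq_nonneg (c - 2*s)]
  have hcl : -(2 * s) < c := by nlinarith [sq_nonneg (c + 2*s)]
  have h2sc : (0:ℝ) < 2 * s - c := by linarith
  have h2scne : (2 * s - c) ≠ 0 := h2sc.ne'
  have hdpos : 0 < 4 * ω - c ^ 2 := by linarith
  set k := Real.sqrt (4 * ω - c ^ 2) with hk_def
  have hk : 0 < k := Real.sqrt_pos.mpr hdpos
  have hk2 : k ^ 2 = 4 * ω - c ^ 2 := Real.sq_sqrt hdpos.le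
  set b := Real.sqrt ((2 * s + c) / (2 * s - c)) with hb_def
  have hfrac : 0 < (2 * s + c) / (2 * s - c) := by
    apply div_pos <;> linarith
  have hb : 0 < b := Real.sqrt_pos.mpr hfrac
  have hb2 : b ^ 2 = (2 * s + c) / (2 * s - c) := Real.sq_sqrt hfrac.le
  have hb2' : b ^ 2 * (2 * s - c) = 2 * s + c := by
    rw [hb2]; field_simp
  have hbk : b * k = 2 * s + c := by
    rw [hb_def, hk_def, ← Real.sqrt_mul hfrac.le]
    have harg : (2 * s + c) / (2 * s - c) * (4 * ω - c ^ 2) = (2 * s + c) ^ 2 := by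
      rw [div_mul_eq_mul_div, div_eq_iff h2scne]
      nlinarith [hs2]
    rw [harg, Real.sqrt_sq (by linarith)]
  set g : ℝ → ℝ := fun y => (Real.sqrt ((4 * ω - c ^ 2) /
      (s * (Real.cosh (k * y) - c / (2 * s))))) ^ 2 with hg_def
  have hden : ∀ y : ℝ, 0 < s * (Real.cosh (k * y) - c / (2 * s)) := by
    intro y
    have h1 : c / (2 * s) < 1 := by
      rw [div_lt_one (by linarith)]; linarith
    have h2 : c / (2 * s) < Real.cosh (k * y) := lt_of_lt_of_le h1 (Real.one_le_cosh (k * y))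
    have h3 : 0 < Real.cosh (k * y) - c / (2 * s) := by linarith
    exact mul_pos hs h3
  have hg_eq : ∀ y : ℝ, g y = (4 * ω - c ^ 2) / (s * (Real.cosh (k * y) - c / (2 * s))) := by
    intro y
    exact Real.sq_sqrt (div_nonneg hdpos.le (hden y).le)
  set G : ℝ → ℝ := fun y => 4 * Real.arctan (b * (Real.sinh (k * y / 2) / Real.cosh (k * y / 2)))
    with hG_def
  have hderiv : ∀ y : ℝ, HasDerivAt G (g y) y := by
    intro y
    set u := k * y / 2 with hu_def
    have hC : 0 < Real.cosh u := Real.cosh_pos u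
    have hCS : Real.cosh u ^ 2 - Real.sinh u ^ 2 = 1 := Real.cosh_sq_sub_sinh_sq u
    have hky : k * y = 2 * u := by rw [hu_def]; ring
    have hlin : HasDerivAt (fun y : ℝ => k * y / 2) (k / 2) y := by
      simpa using ((hasDerivAt_id y).const_mul k).div_const 2
    have hsinh : HasDerivAt (fun y : ℝ => Real.sinh (k * y / 2)) (Real.cosh u * (k / 2)) y :=
      by have := (Real.hasDerivAt_sinh u).comp y hlin; exact this
    have hcosh : HasDerivAt (fun y : ℝ => Real.cosh (k * y / 2)) (Real.sinh u * (k / 2)) y :=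
      by have := (Real.hasDerivAt_cosh u).comp y hlin; exact this
    have hT : HasDerivAt (fun y : ℝ => Real.sinh (k * y / 2) / Real.cosh (k * y / 2))
        ((k / 2) / Real.cosh u ^ 2) y := by
      have := hsinh.div hcosh hC.ne'
      refine this.congr_deriv ?_
      symm
      show k / 2 / Real.cosh u ^ 2 = (Real.cosh u * (k / 2) * Real.cosh u - Real.sinh u * (Real.sinh u * (k / 2))) / Real.cosh u ^ 2
      rw [div_eq_div_iff (by positivity) (by positivity)]
      linear_combination (-(k / 2) * Real.cosh u ^ 2) * hCS
    have hbT : HasDerivAt (fun y : ℝ => b * (Real.sinh (k * y / 2) / Real.cosh (k * y / 2)))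
        (b * ((k / 2) / Real.cosh u ^ 2)) y := hT.const_mul b
    have harc := (Real.hasDerivAt_arctan (b * (Real.sinh u / Real.cosh u))).comp y hbT
    have hG' := harc.const_mul 4
    refine hG'.congr_deriv ?_
    symm
    rw [hg_eq, hky, Real.cosh_two_mul]
    rw [show 4 * ω - c ^ 2 = 4 * s ^ 2 - c ^ 2 by rw [hs2]]
    exact (deriv_identity s c k b (Real.cosh u) (Real.sinh u) hs h2sc hC hCS hb2' hbk).symm
  have hGlim : Tendsto G atTop (nhds (4 * Real.arctan b)) := by
    have h1 : Tendsto (fun y : ℝ => k * y / 2) atTop atTop :=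
      Tendsto.atTop_div_const two_pos (tendsto_id.const_mul_atTop hk)
    have h2 : Tendsto (fun y : ℝ => Real.sinh (k * y / 2) / Real.cosh (k * y / 2))
        atTop (nhds 1) := tanh_lim.comp h1
    have h3 := h2.const_mul b
    rw [mul_one] at h3
    have h4 := (Real.continuous_arctan.tendsto b).comp h3
    exact h4.const_mul 4
  have hG0 : G 0 = 0 := by simp [hG_def]
  have heven : ∀ y : ℝ, g y = g |y| := by
    intro y
    have habs : k * |y| = |k * y| := by rw [abs_mul, abs_of_nonneg hk.le]
    simp only [hg_def, habs, Real.cosh_abs]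
  have hint : (∫ y : ℝ, g y) = 2 * ∫ y in Set.Ioi (0:ℝ), g y := by
    have := integral_comp_abs (f := g)
    rw [← this]
    exact integral_congr_ae (Eventually.of_forall fun y => heven y)
  have hIoi : (∫ y in Set.Ioi (0:ℝ), g y) = 4 * Real.arctan b - G 0 :=
    integral_Ioi_of_hasDerivAt_of_nonneg' (fun x _ => hderiv x)
      (fun x _ => sq_nonneg _) hGlim
  calc (∫ y : ℝ, g y) = 2 * ∫ y in Set.Ioi (0:ℝ), g y := hint
    _ = 8 * Real.arctan b := by rw [hIoi, hG0]; ring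

/-- The squared `L²` norm of the bright-soliton profile is strictly below `4π`, and
tends to `4π` as `c → (2√ω)⁻`. -/
theorem dnls_soliton_mass_bound (ω : ℝ) (hω : 0 < ω) :
    let φ : ℝ → ℝ → ℝ := fun c y =>
      Real.sqrt ((4 * ω - c ^ 2) /
        (Real.sqrt ω * (Real.cosh (Real.sqrt (4 * ω - c ^ 2) * y) - c / (2 * Real.sqrt ω))))
    (∀ c : ℝ, c ^ 2 < 4 * ω → (∫ y : ℝ, (φ c y) ^ 2) < 4 * Real.pi) ∧
    Tendsto (fun c : ℝ => ∫ y : ℝ, (φ c y) ^ 2)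
      (nhdsWithin (2 * Real.sqrt ω) (Set.Iio (2 * Real.sqrt ω)))
      (nhds (4 * Real.pi)) := by
  intro φ
  have hs : 0 < Real.sqrt ω := Real.sqrt_pos.mpr hω
  constructor
  · intro c hc
    rw [show (∫ y : ℝ, (φ c y) ^ 2)
        = 8 * Real.arctan (Real.sqrt ((2 * Real.sqrt ω + c) / (2 * Real.sqrt ω - c)))
      from mass_formula ω hω c hc]
    have := Real.arctan_lt_pi_div_two
      (Real.sqrt ((2 * Real.sqrt ω + c) / (2 * Real.sqrt ω - c)))
    linarith
  · have hmem : Set.Ioo (0:ℝ) (2 * Real.sqrt ω)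
        ∈ nhdsWithin (2 * Real.sqrt ω) (Set.Iio (2 * Real.sqrt ω)) :=
      Ioo_mem_nhdsLT_of_mem ⟨by positivity, le_rfl⟩
    apply Tendsto.congr' (f₁ := fun c : ℝ =>
        8 * Real.arctan (Real.sqrt ((2 * Real.sqrt ω + c) / (2 * Real.sqrt ω - c))))
    · filter_upwards [hmem] with c hc
      have hsq : Real.sqrt ω ^ 2 = ω := Real.sq_sqrt hω.le
      have hc2 : c ^ 2 < 4 * ω := by nlinarith [hc.1, hc.2]
      exact (mass_formula ω hω c hc2).symm
    · have harg : Tendsto (fun c : ℝ => (2 * Real.sqrt ω + c) / (2 * Real.sqrt ω - c))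
          (nhdsWithin (2 * Real.sqrt ω) (Set.Iio (2 * Real.sqrt ω))) atTop := by
        have hnum : Tendsto (fun c : ℝ => 2 * Real.sqrt ω + c)
            (nhdsWithin (2 * Real.sqrt ω) (Set.Iio (2 * Real.sqrt ω)))
            (nhds (4 * Real.sqrt ω)) := by
          have h1 : Tendsto (fun c : ℝ => 2 * Real.sqrt ω + c) (nhds (2 * Real.sqrt ω))
              (nhds (2 * Real.sqrt ω + 2 * Real.sqrt ω)) :=
            (continuous_const.add continuous_id).tendsto _
          rw [show 2 * Real.sqrt ω + 2 * Real.sqrt ω = 4 * Real.sqrt ω by ring] at h1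
          exact h1.mono_left nhdsWithin_le_nhds
        have hden : Tendsto (fun c : ℝ => 2 * Real.sqrt ω - c)
            (nhdsWithin (2 * Real.sqrt ω) (Set.Iio (2 * Real.sqrt ω)))
            (nhdsWithin 0 (Set.Ioi 0)) := by
          rw [tendsto_nhdsWithin_iff]
          refine ⟨?_, ?_⟩
          · have h1 : Tendsto (fun c : ℝ => 2 * Real.sqrt ω - c) (nhds (2 * Real.sqrt ω))
                (nhds (2 * Real.sqrt ω - 2 * Real.sqrt ω)) :=
              (continuous_const.sub continuous_id).tendsto _
            rw [sub_self] at h1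
            exact h1.mono_left nhdsWithin_le_nhds
          · filter_upwards [self_mem_nhdsWithin] with c hc
            simp only [Set.mem_Iio] at hc
            exact Set.mem_Ioi.mpr (by linarith)
        simp_rw [div_eq_mul_inv]
        exact Tendsto.pos_mul_atTop (by positivity) hnum hden.inv_tendsto_nhdsGT_zero
      have hsqrt : Tendsto Real.sqrt atTop atTop := by
        rw [show Real.sqrt = fun x : ℝ => x ^ (1/2 : ℝ) from funext fun x =>
          Real.sqrt_eq_rpow x]
        exact tendsto_rpow_atTop (by norm_num)
      have harctan : Tendsto
          (fun c : ℝ => Real.arctan (Real.sqrt ((2 * Real.sqrt ω + c) / (2 * Real.sqrt ω - c))))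
          (nhdsWithin (2 * Real.sqrt ω) (Set.Iio (2 * Real.sqrt ω))) (nhds (Real.pi / 2)) :=
        (tendsto_nhds_of_tendsto_nhdsWithin Real.tendsto_arctan_atTop).comp (hsqrt.comp harg)
      have h8 := harctan.const_mul (8:ℝ)
      rw [show 8 * (Real.pi / 2) = 4 * Real.pi by ring] at h8
      exact h8
end

section
/- Let λ₀ ∈ ℝ and let ρ : ℝ → ℂ be measurable with 1 + s·|ρ(s)|² > 0 for all s ∈ ℝ. Set κ(s) := −(1/(2π))·log(1 + s·|ρ(s)|²) and assume κ is integrable on (−∞, λ₀]. Then the partial transmission coefficient δ(z) := exp( i·∫_{−∞}^{λ₀} κ(s)/(s − z) ds ) is well defined and holomorphic (complex differentiable) at every point of the open set ℂ \ { x + 0·i : x ∈ ℝ, x ≤ λ₀ }. -/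
set_option maxHeartbeats 1000000

open MeasureTheory

noncomputable def dnlsKappa (ρ : ℝ → ℂ) (s : ℝ) : ℝ :=
  -(1 / (2 * Real.pi)) * Real.log (1 + s * ‖ρ s‖ ^ 2)

noncomputable def dnlsDelta (ρ : ℝ → ℂ) (l₀ : ℝ) (z : ℂ) : ℂ :=
  Complex.exp (Complex.I * ∫ s in Set.Iic l₀, ((dnlsKappa ρ s : ℂ) / ((s : ℂ) - z)))

/-- The partial transmission coefficient is well defined and holomorphic off the cut
`(−∞, λ₀]` of the real axis. -/
theorem dnls_delta_holomorphic (l₀ : ℝ) (ρ : ℝ → ℂ) (hmeas : Measurable ρ)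
    (hpos : ∀ s : ℝ, 0 < 1 + s * ‖ρ s‖ ^ 2)
    (hint : IntegrableOn (dnlsKappa ρ) (Set.Iic l₀)) :
    ∀ z : ℂ, ¬(z.im = 0 ∧ z.re ≤ l₀) →
      IntegrableOn (fun s : ℝ => (dnlsKappa ρ s : ℂ) / ((s : ℂ) - z)) (Set.Iic l₀) ∧
      DifferentiableAt ℂ (dnlsDelta ρ l₀) z := by
  intro z hz
  have hκmeas : Measurable (dnlsKappa ρ) := by
    unfold dnlsKappa
    exact (measurable_const.mul ((Real.measurable_log.comp
      (measurable_const.add (measurable_id.mul (hmeas.norm.pow measurable_const))))))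
  set cut : Set ℂ := (fun s : ℝ => (s : ℂ)) '' Set.Iic l₀ with hcut
  have hclosed : IsClosed cut :=
    Complex.isometry_ofReal.isClosedEmbedding.isClosedMap _ isClosed_Iic
  have hzcut : z ∉ cut := by
    rintro ⟨s, hs, rfl⟩
    exact hz ⟨by simp, by simpa using hs⟩
  have hne : cut.Nonempty := ⟨(l₀ : ℂ), ⟨l₀, Set.mem_Iic.mpr le_rfl, rfl⟩⟩
  set d := Metric.infDist z cut with hd
  have hdpos : 0 < d := by
    exact (hclosed.notMem_iff_infDist_pos hne).1 hzcut
  have hdle : ∀ s : ℝ, s ≤ l₀ → d ≤ ‖(s : ℂ) - z‖ := by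
    intro s hs
    have hmem' : ((s : ℂ)) ∈ cut := ⟨s, Set.mem_Iic.mpr hs, rfl⟩
    have := Metric.infDist_le_dist_of_mem (x := z) hmem'
    rwa [dist_comm, dist_eq_norm] at this
  have hdle2 : ∀ s : ℝ, s ≤ l₀ → ∀ w ∈ Metric.ball z (d / 2), d / 2 ≤ ‖(s : ℂ) - w‖ := by
    intro s hs w hw
    have h1 : ‖(s : ℂ) - z‖ ≤ ‖(s : ℂ) - w‖ + ‖w - z‖ := by
      simpa using norm_sub_le_norm_sub_add_norm_sub (s : ℂ) w z
    have h2 : ‖w - z‖ < d / 2 := by rwa [Metric.mem_ball, dist_eq_norm] at hw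
    have := hdle s hs
    linarith
  set μ := (volume : Measure ℝ).restrict (Set.Iic l₀) with hμ
  have hmem : ∀ᵐ s ∂μ, s ∈ Set.Iic l₀ := ae_restrict_mem measurableSet_Iic
  -- measurability of the integrand for all w
  have hFmeas : ∀ w : ℂ, AEStronglyMeasurable
      (fun s : ℝ => (dnlsKappa ρ s : ℂ) / ((s : ℂ) - w)) μ := by
    intro w
    exact ((Complex.measurable_ofReal.comp hκmeas).div
      ((Complex.measurable_ofReal.sub measurable_const))).aestronglyMeasurable
  -- integrability at z
  have hF_int : Integrable (fun s : ℝ => (dnlsKappa ρ s : ℂ) / ((s : ℂ) - z)) μ := by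
    refine Integrable.mono' (g := fun s => ‖dnlsKappa ρ s‖ / d)
      (hint.norm.div_const d) (hFmeas z) ?_
    filter_upwards [hmem] with s hs
    rw [norm_div, Complex.norm_real]
    exact div_le_div_of_nonneg_left (norm_nonneg _) hdpos (hdle s hs)
  refine ⟨hF_int, ?_⟩
  have hF'_meas : AEStronglyMeasurable
      (fun s : ℝ => (dnlsKappa ρ s : ℂ) * (((s : ℂ) - z) ^ 2)⁻¹) μ := by
    apply Measurable.aestronglyMeasurable
    exact (Complex.measurable_ofReal.comp hκmeas).mul
      (((Complex.measurable_ofReal.sub measurable_const).pow_const 2).inv)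
  have h_bound : ∀ᵐ s ∂μ, ∀ w ∈ Metric.ball z (d / 2),
      ‖(dnlsKappa ρ s : ℂ) * (((s : ℂ) - w) ^ 2)⁻¹‖ ≤ ‖dnlsKappa ρ s‖ / (d / 2) ^ 2 := by
    filter_upwards [hmem] with s hs
    intro w hw
    have h2 := hdle2 s hs w hw
    rw [norm_mul, Complex.norm_real, norm_inv, norm_pow, div_eq_mul_inv]
    have hpow : (d / 2) ^ 2 ≤ ‖(s : ℂ) - w‖ ^ 2 := by
      gcongr
    have hinv : (‖(s : ℂ) - w‖ ^ 2)⁻¹ ≤ ((d / 2) ^ 2)⁻¹ :=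
      inv_anti₀ (pow_pos (half_pos hdpos) 2) hpow
    exact mul_le_mul_of_nonneg_left hinv (norm_nonneg _)
  have h_diff : ∀ᵐ s ∂μ, ∀ w ∈ Metric.ball z (d / 2),
      HasDerivAt (fun w : ℂ => (dnlsKappa ρ s : ℂ) / ((s : ℂ) - w))
        ((dnlsKappa ρ s : ℂ) * (((s : ℂ) - w) ^ 2)⁻¹) w := by
    filter_upwards [hmem] with s hs
    intro w hw
    have h2 := hdle2 s hs w hw
    have h0 : (s : ℂ) - w ≠ 0 := by
      intro h
      rw [h, norm_zero] at h2
      linarith [half_pos hdpos]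
    have h1 : HasDerivAt (fun w : ℂ => (s : ℂ) - w) (-1) w := by
      simpa using (hasDerivAt_id w).const_sub (s : ℂ)
    have h3 := (h1.inv h0).const_mul (dnlsKappa ρ s : ℂ)
    simp only [div_eq_mul_inv]
    convert h3 using 1
    · rfl
    · rfl
    · rfl
    · simp
  have key := hasDerivAt_integral_of_dominated_loc_of_deriv_le (μ := μ)
    (F := fun w s => (dnlsKappa ρ s : ℂ) / ((s : ℂ) - w))
    (F' := fun w s => (dnlsKappa ρ s : ℂ) * (((s : ℂ) - w) ^ 2)⁻¹)
    (bound := fun s => ‖dnlsKappa ρ s‖ / (d / 2) ^ 2)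
    (Metric.ball_mem_nhds z (half_pos hdpos)) (Filter.Eventually.of_forall hFmeas) hF_int hF'_meas
    h_bound (hint.norm.div_const _) h_diff
  have hdiff : DifferentiableAt ℂ
      (fun w : ℂ => ∫ s in Set.Iic l₀, ((dnlsKappa ρ s : ℂ) / ((s : ℂ) - w))) z :=
    key.2.differentiableAt
  have heq : dnlsDelta ρ l₀ = fun w : ℂ =>
      Complex.exp (Complex.I * ∫ s in Set.Iic l₀, ((dnlsKappa ρ s : ℂ) / ((s : ℂ) - w))) := rfl
  rw [heq]
  exact ((hdiff.const_mul Complex.I).cexp)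
end

section
/- Let λ₀ ∈ ℝ and ρ : ℝ → ℂ be measurable, and suppose there is a constant c ≥ 1 with 1/c ≤ 1 + s·|ρ(s)|² ≤ c for all s ≤ λ₀; set κ(s) := −(1/(2π))·log(1 + s·|ρ(s)|²) and assume κ is integrable on (−∞, λ₀]. Then for every z ∈ ℂ \ (−∞, λ₀]: (i) δ(z)·conj( δ( conj z ) ) = 1 (note conj z also lies off the cut); and (ii) c^{−1/2} ≤ |δ(z)| ≤ c^{1/2}. In particular δ never vanishes. -/
open MeasureTheory

lemma dnls_poisson_integrable (l₀ x y : ℝ) :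
    IntegrableOn (fun s : ℝ => |y| / ((s - x) ^ 2 + y ^ 2)) (Set.Iic l₀) := by
  rcases eq_or_ne y 0 with hy | hy
  · have : (fun s : ℝ => |y| / ((s - x) ^ 2 + y ^ 2)) = fun _ => 0 := by
      funext s; simp [hy]
    rw [this]; exact integrableOn_zero
  · have h1 : Integrable fun s : ℝ => (1 + s ^ 2)⁻¹ := integrable_inv_one_add_sq
    have hkey : ∀ s : ℝ, |y| / ((s - x) ^ 2 + y ^ 2)
        = |y| * ((y ^ 2)⁻¹ * (1 + ((s - x) / y) ^ 2)⁻¹) := by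
      intro s
      have hy2 : (y:ℝ) ^ 2 ≠ 0 := pow_ne_zero _ hy
      field_simp
      ring_nf
    have h3 : Integrable fun s : ℝ => (1 + ((s - x) / y) ^ 2)⁻¹ :=
      (h1.comp_div hy).comp_sub_right x
    have hg : Integrable fun s : ℝ => |y| / ((s - x) ^ 2 + y ^ 2) := by
      simp_rw [hkey]
      exact (h3.const_mul _).const_mul _
    exact hg.integrableOn

lemma dnls_poisson_bound (l₀ x y : ℝ) :
    ∫ s in Set.Iic l₀, |y| / ((s - x) ^ 2 + y ^ 2) ≤ Real.pi := by
  rcases eq_or_ne y 0 with hy | hy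
  · simp [hy, Real.pi_pos.le]
  · have h1 : Integrable fun s : ℝ => (1 + s ^ 2)⁻¹ := integrable_inv_one_add_sq
    have hkey : ∀ s : ℝ, |y| / ((s - x) ^ 2 + y ^ 2)
        = |y| * ((y ^ 2)⁻¹ * (1 + ((s - x) / y) ^ 2)⁻¹) := by
      intro s
      have hy2 : (y:ℝ) ^ 2 ≠ 0 := pow_ne_zero _ hy
      field_simp
      ring_nf
    have h2 : Integrable fun s : ℝ => (1 + (s / y) ^ 2)⁻¹ := h1.comp_div hy
    have h3 : Integrable fun s : ℝ => (1 + ((s - x) / y) ^ 2)⁻¹ :=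
      h2.comp_sub_right x
    have hg : Integrable fun s : ℝ => |y| / ((s - x) ^ 2 + y ^ 2) := by
      simp_rw [hkey]
      exact (h3.const_mul _).const_mul _
    have hnn : 0 ≤ᵐ[volume] fun s : ℝ => |y| / ((s - x) ^ 2 + y ^ 2) := by
      filter_upwards with s
      positivity
    have h4 : (∫ s : ℝ, |y| / ((s - x) ^ 2 + y ^ 2)) = Real.pi := by
      simp_rw [hkey]
      rw [integral_const_mul, integral_const_mul]
      have h5 : (∫ s : ℝ, (1 + ((s - x) / y) ^ 2)⁻¹)
          = ∫ s : ℝ, (1 + (s / y) ^ 2)⁻¹ :=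
        integral_sub_right_eq_self (fun s : ℝ => (1 + (s / y) ^ 2)⁻¹) x
      rw [h5, Measure.integral_comp_div (fun s : ℝ => (1 + s ^ 2)⁻¹) y,
        integral_univ_inv_one_add_sq]
      simp only [smul_eq_mul]
      have : |y| * ((y ^ 2)⁻¹ * (|y| * Real.pi)) = (|y| * |y|) * (y ^ 2)⁻¹ * Real.pi := by ring
      rw [this, abs_mul_abs_self, ← sq, mul_inv_cancel₀ (pow_ne_zero _ hy), one_mul]
    calc ∫ s in Set.Iic l₀, |y| / ((s - x) ^ 2 + y ^ 2)
        ≤ ∫ s : ℝ, |y| / ((s - x) ^ 2 + y ^ 2) := setIntegral_le_integral hg hnn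
      _ = Real.pi := h4

/-- Symmetry `δ(z)·conj(δ(conj z)) = 1` and the bounds `c^{-1/2} ≤ |δ(z)| ≤ c^{1/2}`;
in particular `δ` never vanishes. -/
theorem dnls_delta_symmetry_and_bounds (l₀ : ℝ) (ρ : ℝ → ℂ) (hmeas : Measurable ρ)
    (c : ℝ) (hc : 1 ≤ c)
    (hlow : ∀ s : ℝ, s ≤ l₀ → 1 / c ≤ 1 + s * ‖ρ s‖ ^ 2)
    (hhigh : ∀ s : ℝ, s ≤ l₀ → 1 + s * ‖ρ s‖ ^ 2 ≤ c)
    (hint : IntegrableOn (dnlsKappa ρ) (Set.Iic l₀)) :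
    ∀ z : ℂ, ¬(z.im = 0 ∧ z.re ≤ l₀) →
      dnlsDelta ρ l₀ z * (starRingEnd ℂ) (dnlsDelta ρ l₀ ((starRingEnd ℂ) z)) = 1 ∧
      (Real.sqrt c)⁻¹ ≤ ‖dnlsDelta ρ l₀ z‖ ∧
      ‖dnlsDelta ρ l₀ z‖ ≤ Real.sqrt c ∧
      dnlsDelta ρ l₀ z ≠ 0 := by
  intro z hz
  have hcpos : (0 : ℝ) < c := lt_of_lt_of_le one_pos hc
  set κ := dnlsKappa ρ with hκdef
  set J : ℂ := ∫ s in Set.Iic l₀, ((κ s : ℂ) / ((s : ℂ) - z)) with hJdef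
  -- symmetry
  have hsym : dnlsDelta ρ l₀ z *
      (starRingEnd ℂ) (dnlsDelta ρ l₀ ((starRingEnd ℂ) z)) = 1 := by
    have hJc : (∫ s in Set.Iic l₀,
        ((κ s : ℂ) / ((s : ℂ) - (starRingEnd ℂ) z))) = (starRingEnd ℂ) J := by
      rw [hJdef, ← integral_conj]
      congr 1
      funext s
      simp [map_div₀, Complex.conj_ofReal]
    have : (starRingEnd ℂ) (dnlsDelta ρ l₀ ((starRingEnd ℂ) z))
        = Complex.exp (-(Complex.I * J)) := by
      rw [dnlsDelta, hJc, ← Complex.exp_conj]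
      congr 1
      simp [Complex.conj_I]
    rw [this, dnlsDelta, ← hJdef, ← Complex.exp_add, add_neg_cancel, Complex.exp_zero]
  -- separation from the cut
  obtain ⟨ε, hεpos, hsep⟩ : ∃ ε > 0, ∀ s : ℝ, s ≤ l₀ → ε ≤ ‖(s : ℂ) - z‖ := by
    rcases not_and_or.mp hz with him | hre
    · refine ⟨|z.im|, abs_pos.mpr him, fun s hs => ?_⟩
      calc |z.im| = |((s : ℂ) - z).im| := by simp
        _ ≤ ‖(s : ℂ) - z‖ := Complex.abs_im_le_norm _
    · have hre' : l₀ < z.re := lt_of_not_ge hre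
      refine ⟨z.re - l₀, sub_pos.mpr hre', fun s hs => ?_⟩
      calc z.re - l₀ ≤ z.re - s := by linarith
        _ ≤ |((s : ℂ) - z).re| := by
            simp only [Complex.sub_re, Complex.ofReal_re]
            rw [abs_sub_comm]
            exact le_abs_self _
        _ ≤ ‖(s : ℂ) - z‖ := Complex.abs_re_le_norm _
  -- measurability of κ
  have hκm : Measurable κ := by
    rw [hκdef]
    unfold dnlsKappa
    exact measurable_const.mul
      ((measurable_const.add (measurable_id.mul ((hmeas.norm).pow_const 2))).log)
  -- integrability of the integrand
  have hFm : Measurable fun s : ℝ => ((κ s : ℂ) / ((s : ℂ) - z)) :=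
    (Complex.measurable_ofReal.comp hκm).div
      ((Complex.measurable_ofReal.sub measurable_const))
  have hF : IntegrableOn (fun s : ℝ => ((κ s : ℂ) / ((s : ℂ) - z))) (Set.Iic l₀) := by
    refine Integrable.mono' ((hint.abs).const_mul ε⁻¹)
      hFm.aestronglyMeasurable ?_
    rw [ae_restrict_iff' measurableSet_Iic]
    filter_upwards with s hs
    have habs : ε ≤ ‖(s : ℂ) - z‖ := hsep s hs
    rw [norm_div, Complex.norm_real]
    rw [div_eq_mul_inv]
    calc ‖κ s‖ * ‖(s : ℂ) - z‖⁻¹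
        ≤ ‖κ s‖ * ε⁻¹ := by gcongr
      _ = ε⁻¹ * |κ s| := by rw [Real.norm_eq_abs]; ring
  -- |κ| bound
  have hκb : ∀ s : ℝ, s ≤ l₀ → |κ s| ≤ Real.log c / (2 * Real.pi) := by
    intro s hs
    have hupos : (0 : ℝ) < 1 + s * ‖ρ s‖ ^ 2 :=
      lt_of_lt_of_le (by positivity) (hlow s hs)
    have h1 : Real.log (1 + s * ‖ρ s‖ ^ 2) ≤ Real.log c :=
      Real.log_le_log hupos (hhigh s hs)
    have h2 : -Real.log c ≤ Real.log (1 + s * ‖ρ s‖ ^ 2) := by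
      rw [← Real.log_inv]
      apply Real.log_le_log (by positivity)
      rw [inv_eq_one_div]
      exact hlow s hs
    have h3 : |Real.log (1 + s * ‖ρ s‖ ^ 2)| ≤ Real.log c := abs_le.mpr ⟨h2, h1⟩
    rw [hκdef]
    unfold dnlsKappa
    rw [abs_mul, abs_neg, abs_of_nonneg (by positivity : (0:ℝ) ≤ 1 / (2 * Real.pi))]
    rw [div_eq_mul_inv, one_mul, div_eq_mul_inv, mul_comm (Real.log c)]
    gcongr
  -- imaginary part of J
  have hJim : |J.im| ≤ Real.log c / 2 := by
    have him : J.im = ∫ s in Set.Iic l₀, ((κ s : ℂ) / ((s : ℂ) - z)).im :=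
      (integral_im hF).symm
    have hptw : ∀ s : ℝ, ((κ s : ℂ) / ((s : ℂ) - z)).im
        = κ s * z.im / ((s - z.re) ^ 2 + z.im ^ 2) := by
      intro s
      rw [Complex.div_im]
      simp [Complex.normSq_apply]
      ring
    set K : ℝ := Real.log c / (2 * Real.pi) with hK
    have hKnn : 0 ≤ K := by
      apply div_nonneg (Real.log_nonneg hc) (by positivity)
    have hbound : ∀ s ∈ Set.Iic l₀,
        |((κ s : ℂ) / ((s : ℂ) - z)).im|
          ≤ K * (|z.im| / ((s - z.re) ^ 2 + z.im ^ 2)) := by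
      intro s hs
      rw [hptw s]
      have hD : (0:ℝ) ≤ (s - z.re) ^ 2 + z.im ^ 2 := by positivity
      rw [abs_div, abs_mul, abs_of_nonneg hD, div_eq_mul_inv, mul_assoc,
        ← div_eq_mul_inv]
      exact mul_le_mul_of_nonneg_right (hκb s hs) (by positivity)
    have h1 : |J.im| ≤ ∫ s in Set.Iic l₀, |((κ s : ℂ) / ((s : ℂ) - z)).im| := by
      rw [him, ← Real.norm_eq_abs]
      refine (norm_integral_le_integral_norm _).trans_eq ?_
      simp [Real.norm_eq_abs]
    have h2 : (∫ s in Set.Iic l₀, |((κ s : ℂ) / ((s : ℂ) - z)).im|)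
        ≤ ∫ s in Set.Iic l₀, K * (|z.im| / ((s - z.re) ^ 2 + z.im ^ 2)) := by
      refine setIntegral_mono_on (hF.im.abs) ?_ measurableSet_Iic hbound
      exact (dnls_poisson_integrable l₀ z.re z.im).const_mul K
    have h3 : (∫ s in Set.Iic l₀, K * (|z.im| / ((s - z.re) ^ 2 + z.im ^ 2)))
        ≤ K * Real.pi := by
      rw [integral_const_mul]
      exact mul_le_mul_of_nonneg_left (dnls_poisson_bound l₀ z.re z.im) hKnn
    have h4 : K * Real.pi = Real.log c / 2 := by
      rw [hK]
      field_simp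
    linarith
  have habs : ‖dnlsDelta ρ l₀ z‖ = Real.exp (-J.im) := by
    rw [dnlsDelta, ← hJdef, Complex.norm_exp]
    congr 1
    simp [Complex.mul_re]
  have hsqrt : Real.sqrt c = Real.exp (Real.log c / 2) := by
    rw [Real.sqrt_eq_rpow, Real.rpow_def_of_pos hcpos, mul_one_div]
  obtain ⟨hJ1, hJ2⟩ := abs_le.mp hJim
  refine ⟨hsym, ?_, ?_, ?_⟩
  · rw [habs, hsqrt, ← Real.exp_neg]
    exact Real.exp_le_exp.mpr (by linarith)
  · rw [habs, hsqrt]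
    exact Real.exp_le_exp.mpr (by linarith)
  · rw [dnlsDelta]
    exact Complex.exp_ne_zero _
end

section
/- Let λ₀ ∈ ℝ and ρ : ℝ → ℂ be measurable with 1 + s·|ρ(s)|² > 0 for all s; set κ(s) := −(1/(2π))·log(1 + s·|ρ(s)|²) and assume κ is integrable and bounded on (−∞, λ₀]. Let λ₁ < λ₀ be a point at which κ is continuous. Then δ satisfies the multiplicative jump relation across the cut at λ₁: lim_{t → 0⁺} δ(λ₁ + i·t) / δ(λ₁ − i·t) = 1 + λ₁·|ρ(λ₁)|². -/
open MeasureTheory Filter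

theorem dnls_poisson_limit (f : ℝ → ℝ) (l₀ l₁ : ℝ) (hlt : l₁ < l₀)
    (hint : IntegrableOn f (Set.Iic l₀)) {M : ℝ} (hbdd : ∀ s : ℝ, s ≤ l₀ → |f s| ≤ M)
    (hcont : ContinuousAt f l₁) :
    Tendsto (fun t : ℝ => ∫ s in Set.Iic l₀, f s * (t / ((s - l₁) ^ 2 + t ^ 2)))
      (nhdsWithin 0 (Set.Ioi 0)) (nhds (Real.pi * f l₁)) := by
  set g : ℝ → ℝ := (Set.Iic l₀).indicator f with hg_def
  have hg : Integrable g := (integrable_indicator_iff measurableSet_Iic).2 hint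
  have hgabs : ∀ x, |g x| ≤ M := by
    intro x
    by_cases hx : x ∈ Set.Iic l₀
    · simpa [hg_def, Set.indicator_of_mem hx] using hbdd x hx
    · simpa [hg_def, Set.indicator_of_notMem hx] using
        le_trans (abs_nonneg (f l₀)) (hbdd l₀ le_rfl)
  have hM0 : 0 ≤ M := le_trans (abs_nonneg _) (hbdd l₀ le_rfl)
  have hcont_inv : Continuous fun u : ℝ => (1 + u ^ 2)⁻¹ :=
    (continuous_const.add (continuous_pow 2)).inv₀ (fun u => by show (1:ℝ) + u ^ 2 ≠ 0; positivity)
  -- change of variables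
  have key : ∀ t : ℝ, 0 < t →
      (∫ s in Set.Iic l₀, f s * (t / ((s - l₁) ^ 2 + t ^ 2)))
        = ∫ u : ℝ, g (l₁ + t * u) * (1 + u ^ 2)⁻¹ := by
    intro t ht
    have hF : ∀ u : ℝ, g (l₁ + t * u) * (1 + u ^ 2)⁻¹
        = t * ((fun s => g s * (t / ((s - l₁) ^ 2 + t ^ 2))) (l₁ + t * u)) := by
      intro u
      have h1 : (l₁ + t * u - l₁) ^ 2 + t ^ 2 = t ^ 2 * (1 + u ^ 2) := by ring
      simp only [h1]
      have h2 : (1 : ℝ) + u ^ 2 ≠ 0 := by positivity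
      field_simp
    rw [show (∫ u : ℝ, g (l₁ + t * u) * (1 + u ^ 2)⁻¹)
        = ∫ u : ℝ, t * ((fun s => g s * (t / ((s - l₁) ^ 2 + t ^ 2))) (l₁ + t * u)) from by
      simp only [hF]]
    rw [integral_const_mul]
    rw [show (∫ u : ℝ, (fun s => g s * (t / ((s - l₁) ^ 2 + t ^ 2))) (l₁ + t * u))
        = ∫ u : ℝ, (fun v => g (l₁ + v) * (t / ((l₁ + v - l₁) ^ 2 + t ^ 2))) (t * u) from rfl]
    rw [Measure.integral_comp_mul_left
      (fun v => g (l₁ + v) * (t / ((l₁ + v - l₁) ^ 2 + t ^ 2))) t]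
    rw [integral_add_left_eq_self (fun s : ℝ => g s * (t / ((s - l₁) ^ 2 + t ^ 2))) l₁]
    rw [smul_eq_mul, abs_of_pos (inv_pos.2 ht), ← mul_assoc, mul_inv_cancel₀ ht.ne', one_mul]
    rw [show (∫ s : ℝ, g s * (t / ((s - l₁) ^ 2 + t ^ 2)))
        = ∫ s : ℝ, (Set.Iic l₀).indicator (fun s => f s * (t / ((s - l₁) ^ 2 + t ^ 2))) s from by
      congr 1; ext s; rw [Set.indicator_mul_left]]
    rw [integral_indicator measurableSet_Iic]
  -- dominated convergence
  have hmain : Tendsto (fun t : ℝ => ∫ u : ℝ, g (l₁ + t * u) * (1 + u ^ 2)⁻¹)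
      (nhdsWithin 0 (Set.Ioi 0)) (nhds (∫ u : ℝ, f l₁ * (1 + u ^ 2)⁻¹)) := by
    apply tendsto_integral_filter_of_dominated_convergence (fun u => M * (1 + u ^ 2)⁻¹)
    · filter_upwards [self_mem_nhdsWithin] with t ht
      exact (((hg.comp_add_left l₁).comp_mul_left' (ne_of_gt (Set.mem_Ioi.1 ht))).aestronglyMeasurable).mul
        hcont_inv.aestronglyMeasurable
    · filter_upwards with t
      filter_upwards with u
      rw [Real.norm_eq_abs, abs_mul, abs_of_pos (by positivity : (0:ℝ) < (1 + u ^ 2)⁻¹)]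
      exact mul_le_mul_of_nonneg_right (hgabs _) (by positivity)
    · exact integrable_inv_one_add_sq.const_mul M
    · filter_upwards with u
      have htu : Tendsto (fun t : ℝ => l₁ + t * u) (nhdsWithin 0 (Set.Ioi 0)) (nhds l₁) := by
        have : Tendsto (fun t : ℝ => l₁ + t * u) (nhds 0) (nhds (l₁ + 0 * u)) :=
          (continuous_const.add (continuous_id.mul continuous_const)).tendsto 0
        simpa using this.mono_left nhdsWithin_le_nhds
      have hev : ∀ᶠ t in nhdsWithin 0 (Set.Ioi 0), g (l₁ + t * u) = f (l₁ + t * u) := by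
        filter_upwards [htu.eventually (isOpen_Iio.eventually_mem (show l₁ ∈ Set.Iio l₀ from hlt))]
          with t ht
        exact Set.indicator_of_mem (Set.mem_Iic.2 (le_of_lt ht)) f
      exact ((hcont.tendsto.comp htu).congr' (hev.mono fun t h => h.symm)).mul tendsto_const_nhds
  have hval : (∫ u : ℝ, f l₁ * (1 + u ^ 2)⁻¹) = Real.pi * f l₁ := by
    rw [integral_const_mul, integral_univ_inv_one_add_sq, mul_comm]
  rw [← hval]
  exact hmain.congr' (by filter_upwards [self_mem_nhdsWithin] with t ht; exact (key t ht).symm)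


/-- Multiplicative jump relation of `δ` across the cut at a point `l₁ < l₀` of
continuity of `κ`:  `δ₊(l₁)/δ₋(l₁) = 1 + l₁·|ρ(l₁)|²`. -/
theorem dnls_delta_jump (l₀ l₁ : ℝ) (ρ : ℝ → ℂ)
    (hpos : ∀ s : ℝ, 0 < 1 + s * ‖ρ s‖ ^ 2)
    (hint : IntegrableOn (dnlsKappa ρ) (Set.Iic l₀))
    (hbdd : ∃ M : ℝ, ∀ s : ℝ, s ≤ l₀ → |dnlsKappa ρ s| ≤ M)
    (hlt : l₁ < l₀) (hcont : ContinuousAt (dnlsKappa ρ) l₁) :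
    Tendsto (fun t : ℝ =>
        dnlsDelta ρ l₀ ((l₁ : ℂ) + (t : ℂ) * Complex.I) /
          dnlsDelta ρ l₀ ((l₁ : ℂ) - (t : ℂ) * Complex.I))
      (nhdsWithin 0 (Set.Ioi 0))
      (nhds ((1 + l₁ * ‖ρ l₁‖ ^ 2 : ℝ) : ℂ)) := by
  obtain ⟨M, hM⟩ := hbdd
  set κ := dnlsKappa ρ with hκ
  -- integrability of the Cauchy kernel against κ for z off the real axis
  have keyint : ∀ z : ℂ, z.im ≠ 0 →
      IntegrableOn (fun s : ℝ => (κ s : ℂ) / ((s : ℂ) - z)) (Set.Iic l₀) := by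
    intro z hz
    have hzero : ∀ s : ℝ, (s : ℂ) - z ≠ 0 := by
      intro s h
      apply hz
      have := congrArg Complex.im h
      simpa using this.symm
    have hcont2 : Continuous fun s : ℝ => ((s : ℂ) - z)⁻¹ :=
      (Complex.continuous_ofReal.sub continuous_const).inv₀ hzero
    have hmeas : AEStronglyMeasurable (fun s : ℝ => (κ s : ℂ) / ((s : ℂ) - z))
        (volume.restrict (Set.Iic l₀)) := by
      rw [show (fun s : ℝ => (κ s : ℂ) / ((s : ℂ) - z))
          = (fun s : ℝ => (κ s : ℂ)) * fun s : ℝ => ((s : ℂ) - z)⁻¹ from by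
            ext s; simp [div_eq_mul_inv]]
      exact
        ((Complex.continuous_ofReal.comp_aestronglyMeasurable
          hint.aestronglyMeasurable).mul hcont2.aestronglyMeasurable)
    have hzpos : (0 : ℝ) < |z.im| := abs_pos.2 hz
    apply Integrable.mono' (hint.norm.mul_const |z.im|⁻¹) hmeas
    filter_upwards with s
    rw [norm_div, Complex.norm_real, div_eq_mul_inv]
    apply mul_le_mul_of_nonneg_left _ (abs_nonneg _)
    apply inv_anti₀ hzpos
    calc |z.im| = |((s : ℂ) - z).im| := by simp
      _ ≤ ‖(s : ℂ) - z‖ := Complex.abs_im_le_norm _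
  -- pointwise formula for the ratio
  have hratio : ∀ t : ℝ, 0 < t →
      dnlsDelta ρ l₀ ((l₁ : ℂ) + (t : ℂ) * Complex.I) /
          dnlsDelta ρ l₀ ((l₁ : ℂ) - (t : ℂ) * Complex.I)
        = Complex.exp
            (((-2 : ℝ) * ∫ s in Set.Iic l₀, κ s * (t / ((s - l₁) ^ 2 + t ^ 2)) : ℝ) : ℂ) := by
    intro t ht
    have himp : ((l₁ : ℂ) + (t : ℂ) * Complex.I).im ≠ 0 := by simp [ht.ne']
    have himm : ((l₁ : ℂ) - (t : ℂ) * Complex.I).im ≠ 0 := by simp [ht.ne']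
    rw [dnlsDelta, dnlsDelta, ← Complex.exp_sub, ← mul_sub,
      ← integral_sub (keyint _ himp) (keyint _ himm), ← integral_const_mul]
    congr 1
    have hpt : ∀ s : ℝ,
        Complex.I * ((κ s : ℂ) / ((s : ℂ) - ((l₁ : ℂ) + (t : ℂ) * Complex.I)) -
            (κ s : ℂ) / ((s : ℂ) - ((l₁ : ℂ) - (t : ℂ) * Complex.I)))
          = (((-2 : ℝ) * (κ s * (t / ((s - l₁) ^ 2 + t ^ 2))) : ℝ) : ℂ) := by
      intro s
      have h3 : ((s - l₁) ^ 2 + t ^ 2 : ℝ) ≠ 0 := by positivity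
      have h1 : (s : ℂ) - ((l₁ : ℂ) + (t : ℂ) * Complex.I) ≠ 0 := by
        intro h
        have := congrArg Complex.im h
        simp at this
        exact ht.ne' this
      have h2 : (s : ℂ) - ((l₁ : ℂ) - (t : ℂ) * Complex.I) ≠ 0 := by
        intro h
        have := congrArg Complex.im h
        simp at this
        exact ht.ne' this
      have h3' : ((s : ℂ) - l₁) ^ 2 + (t : ℂ) ^ 2 ≠ 0 := by
        have : (((s - l₁) ^ 2 + t ^ 2 : ℝ) : ℂ) ≠ 0 := Complex.ofReal_ne_zero.2 h3
        push_cast at this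
        exact this
      push_cast
      have e : ((s:ℂ) - ((l₁:ℂ) + (t:ℂ) * Complex.I)) * ((s:ℂ) - ((l₁:ℂ) - (t:ℂ) * Complex.I)) = ((s:ℂ) - l₁) ^ 2 + (t:ℂ) ^ 2 := by
        ring_nf; rw [Complex.I_sq]; ring
      rw [div_sub_div _ _ h1 h2, e]
      field_simp
      ring_nf
      rw [Complex.I_sq]
      ring
    calc (∫ s in Set.Iic l₀,
          Complex.I * ((κ s : ℂ) / ((s : ℂ) - ((l₁ : ℂ) + (t : ℂ) * Complex.I)) -
            (κ s : ℂ) / ((s : ℂ) - ((l₁ : ℂ) - (t : ℂ) * Complex.I))))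
        = ∫ s in Set.Iic l₀,
            (((-2 : ℝ) * (κ s * (t / ((s - l₁) ^ 2 + t ^ 2))) : ℝ) : ℂ) := by
          exact integral_congr_ae (Filter.Eventually.of_forall fun s => hpt s)
      _ = (((∫ s in Set.Iic l₀, (-2 : ℝ) * (κ s * (t / ((s - l₁) ^ 2 + t ^ 2)))) : ℝ) : ℂ) :=
          integral_ofReal
      _ = (((-2 : ℝ) * ∫ s in Set.Iic l₀, κ s * (t / ((s - l₁) ^ 2 + t ^ 2)) : ℝ) : ℂ) := by
          rw [integral_const_mul]
  -- the Poisson-kernel limit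
  have hJ := dnls_poisson_limit κ l₀ l₁ hlt hint hM hcont
  have hJ2 : Tendsto (fun t : ℝ =>
      Complex.exp (((-2 : ℝ) * ∫ s in Set.Iic l₀, κ s * (t / ((s - l₁) ^ 2 + t ^ 2)) : ℝ) : ℂ))
      (nhdsWithin 0 (Set.Ioi 0))
      (nhds (Complex.exp (((-2 : ℝ) * (Real.pi * κ l₁) : ℝ) : ℂ))) := by
    exact (Complex.continuous_exp.tendsto _).comp
      ((Complex.continuous_ofReal.tendsto _).comp (hJ.const_mul (-2 : ℝ)))
  have hval : Complex.exp (((-2 : ℝ) * (Real.pi * κ l₁) : ℝ) : ℂ)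
      = ((1 + l₁ * ‖ρ l₁‖ ^ 2 : ℝ) : ℂ) := by
    rw [← Complex.ofReal_exp]
    have hlog : (-2 : ℝ) * (Real.pi * κ l₁) = Real.log (1 + l₁ * ‖ρ l₁‖ ^ 2) := by
      rw [hκ, dnlsKappa]
      field_simp
    exact congrArg _ (by rw [hlog, Real.exp_log (hpos l₁)])
  rw [← hval]
  refine hJ2.congr' ?_
  filter_upwards [self_mem_nhdsWithin] with t ht
  exact (hratio t ht).symm
end

section
/- Let λ₀ ∈ ℝ and ρ : ℝ → ℂ be measurable with 1 + s·|ρ(s)|² > 0 for all s; set κ(s) := −(1/(2π))·log(1 + s·|ρ(s)|²) and assume κ is integrable on (−∞, λ₀]. Then δ(z) = 1 + δ₁/z + o(1/z) away from the cut, with δ₁ = −i·∫_{−∞}^{λ₀} κ(s) ds; precisely, for every ε ∈ (0, π), the function z·(δ(z) − 1) tends to −i·∫_{−∞}^{λ₀} κ(s) ds as |z| → ∞ with z ranging over the sector { z ∈ ℂ : z ≠ λ₀ and |Arg(z − λ₀)| ≤ π − ε } (Arg denoting the principal argument). -/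
open MeasureTheory Filter

lemma dnls_sector_bound {ε : ℝ} (hε : 0 < ε) (hεπ : ε < Real.pi) {w : ℂ} (hw : w ≠ 0)
    (harg : |w.arg| ≤ Real.pi - ε) {t : ℝ} (ht : 0 ≤ t) :
    Real.sin ε * ‖w‖ ≤ ‖w + (t : ℂ)‖ := by
  have hsin : 0 < Real.sin ε := Real.sin_pos_of_pos_of_lt_pi hε hεπ
  have hsin1 : Real.sin ε ≤ 1 := Real.sin_le_one ε
  have hw0 : 0 < ‖w‖ := norm_pos_iff.mpr hw
  have habs2 : (‖w‖) ^ 2 = w.re ^ 2 + w.im ^ 2 := by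
    rw [Complex.sq_norm, Complex.normSq_apply]; ring
  have habs2' : (‖w + (t : ℂ)‖) ^ 2 = (w.re + t) ^ 2 + w.im ^ 2 := by
    rw [Complex.sq_norm, Complex.normSq_apply]
    simp [Complex.add_re, Complex.add_im]
    ring
  have key : (Real.sin ε * ‖w‖) ^ 2 ≤ (‖w + (t : ℂ)‖) ^ 2 := by
    rcases le_or_gt 0 w.re with hre | hre
    · rw [habs2', mul_pow, habs2]
      have hsq : Real.sin ε ^ 2 ≤ 1 := by nlinarith
      nlinarith [mul_le_mul_of_nonneg_right hsq (add_nonneg (sq_nonneg w.re) (sq_nonneg w.im)),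
        mul_nonneg ht hre, sq_nonneg t]
    · -- Re w < 0 : use |Im w| ≥ sin ε * |w|
      have hcos : Real.cos w.arg = w.re / ‖w‖ := Complex.cos_arg hw
      have hcosneg : Real.cos w.arg < 0 := by
        rw [hcos]; exact div_neg_of_neg_of_pos hre hw0
      have hargpi : |w.arg| ≤ Real.pi := by
        have := harg; linarith
      have hhalf : Real.pi / 2 < |w.arg| := by
        by_contra h
        push_neg at h
        obtain ⟨h1, h2⟩ := abs_le.mp h
        have : 0 ≤ Real.cos w.arg := Real.cos_nonneg_of_mem_Icc ⟨h1, h2⟩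
        linarith
      have hsinθ : Real.sin ε ≤ Real.sin |w.arg| := by
        rw [show Real.sin |w.arg| = Real.sin (Real.pi - |w.arg|) from (Real.sin_pi_sub _).symm]
        exact Real.sin_le_sin_of_le_of_le_pi_div_two (by linarith [Real.pi_pos])
          (by linarith) (by linarith)
      have hsinabs : Real.sin |w.arg| = |Real.sin w.arg| := by
        rcases le_or_gt 0 w.arg with h | h
        · rw [abs_of_nonneg h, abs_of_nonneg (Real.sin_nonneg_of_nonneg_of_le_pi h (by
            rw [abs_of_nonneg h] at hargpi; exact hargpi))]
        · rw [abs_of_neg h, Real.sin_neg, abs_of_nonpos]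
          apply Real.sin_nonpos_of_nonpos_of_neg_pi_le h.le
          rw [abs_of_neg h] at hargpi; linarith
      have him : Real.sin ε * ‖w‖ ≤ |w.im| := by
        have := Complex.norm_mul_sin_arg w
        calc Real.sin ε * ‖w‖ ≤ |Real.sin w.arg| * ‖w‖ := by
              rw [← hsinabs]; exact mul_le_mul_of_nonneg_right hsinθ hw0.le
          _ = |‖w‖ * Real.sin w.arg| := by
              rw [abs_mul, abs_of_nonneg hw0.le]; ring
          _ = |w.im| := by rw [this]
      rw [habs2', mul_pow, habs2]
      nlinarith [sq_nonneg (w.re + t), abs_nonneg w.im, sq_abs w.im, mul_pos hsin hw0]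
  have h1 : 0 ≤ Real.sin ε * ‖w‖ := by positivity
  nlinarith [norm_nonneg (w + (t : ℂ))]

/-- Large-`z` expansion `δ(z) = 1 + δ₁/z + o(1/z)` in sectors away from the cut, with
`δ₁ = −i ∫_{−∞}^{l₀} κ(s) ds`. -/
theorem dnls_delta_expansion (l₀ : ℝ) (ρ : ℝ → ℂ)
    (hpos : ∀ s : ℝ, 0 < 1 + s * ‖ρ s‖ ^ 2)
    (hint : IntegrableOn (dnlsKappa ρ) (Set.Iic l₀)) :
    ∀ ε : ℝ, 0 < ε → ε < Real.pi →
      Tendsto (fun z : ℂ => z * (dnlsDelta ρ l₀ z - 1))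
        ((Filter.comap (fun z : ℂ => ‖z‖) Filter.atTop) ⊓
          Filter.principal
            {z : ℂ | z ≠ (l₀ : ℂ) ∧ |Complex.arg (z - (l₀ : ℂ))| ≤ Real.pi - ε})
        (nhds (-Complex.I * ((∫ s in Set.Iic l₀, dnlsKappa ρ s) : ℂ))) := by
  intro ε hε hεπ
  have hsin : 0 < Real.sin ε := Real.sin_pos_of_pos_of_lt_pi hε hεπ
  set κ : ℝ → ℝ := dnlsKappa ρ with hκ
  set S : Set ℂ := {z : ℂ | z ≠ (l₀ : ℂ) ∧ |Complex.arg (z - (l₀ : ℂ))| ≤ Real.pi - ε} with hSdef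
  set L : Filter ℂ := (Filter.comap (fun z : ℂ => ‖z‖) Filter.atTop) ⊓ Filter.principal S with hLdef
  set K : ℂ := ((∫ s in Set.Iic l₀, dnlsKappa ρ s : ℝ) : ℂ) with hKdef
  set F : ℂ → ℂ := fun z => Complex.I * ∫ s in Set.Iic l₀, ((κ s : ℂ) / ((s : ℂ) - z)) with hFdef
  -- basic filter facts
  have hcomap : Filter.comap (fun z : ℂ => ‖z‖) Filter.atTop = Bornology.cobounded ℂ := by
    exact comap_norm_atTop
  have hLcobdd : Tendsto (fun z : ℂ => z) L (Bornology.cobounded ℂ) := by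
    exact hcomap ▸ (tendsto_id.mono_right inf_le_left)
  have hS : ∀ᶠ z in L, z ∈ S := eventually_inf_principal.mpr (Eventually.of_forall fun z h => h)
  have habs : ∀ C : ℝ, ∀ᶠ z in L, C ≤ ‖z‖ := by
    intro C
    have h1 : Tendsto (fun z : ℂ => ‖z‖) L atTop := tendsto_comap.mono_left inf_le_left
    exact h1.eventually (eventually_ge_atTop C)
  haveI : L.IsCountablyGenerated := by
    rw [hLdef, ← hcomap] at *
    infer_instance
  -- key distance bound on the sector
  have hdist : ∀ z ∈ S, ‖(l₀ : ℂ)‖ ≤ ‖z - l₀‖ → ∀ s ∈ Set.Iic l₀,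
      Real.sin ε * ‖z - l₀‖ ≤ ‖(s : ℂ) - z‖ ∧
      ‖z‖ ≤ 2 * ‖z - l₀‖ := by
    intro z hz hbig s hs
    have hw : z - (l₀ : ℂ) ≠ 0 := sub_ne_zero.mpr hz.1
    have ht : (0 : ℝ) ≤ l₀ - s := by simpa using hs
    have hkey := dnls_sector_bound hε hεπ hw hz.2 ht
    constructor
    · have : (s : ℂ) - z = -((z - l₀) + ((l₀ - s : ℝ) : ℂ)) := by push_cast; ring
      rw [this, norm_neg]
      exact hkey
    · calc ‖z‖ = ‖(z - l₀) + (l₀ : ℂ)‖ := by ring_nf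
        _ ≤ ‖z - l₀‖ + ‖(l₀ : ℂ)‖ := norm_add_le _ _
        _ ≤ 2 * ‖z - l₀‖ := by linarith
  -- dominated convergence
  have hmeas := hint.aestronglyMeasurable
  have hDCT : Tendsto (fun z : ℂ => ∫ s in Set.Iic l₀, z * (κ s : ℂ) / ((s : ℂ) - z)) L
      (nhds (∫ s in Set.Iic l₀, -(κ s : ℂ))) := by
    apply tendsto_integral_filter_of_dominated_convergence (fun s => (2 / Real.sin ε) * ‖κ s‖)
    · filter_upwards with z
      apply AEStronglyMeasurable.mul
      · exact (Complex.continuous_ofReal.comp_aestronglyMeasurable hmeas).const_mul z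
      · apply Measurable.aestronglyMeasurable
        exact (Complex.measurable_ofReal.sub measurable_const).inv
    · filter_upwards [hS, habs (‖(l₀ : ℂ)‖ + ‖(l₀ : ℂ)‖)] with z hz hb
      have hbig : ‖(l₀ : ℂ)‖ ≤ ‖z - l₀‖ := by
        have h2 := norm_sub_norm_le z ((l₀ : ℂ))
        linarith
      apply Filter.eventually_of_mem (self_mem_ae_restrict measurableSet_Iic)
      intro s hs
      obtain ⟨hd1, hd2⟩ := hdist z hz hbig s hs
      have hwpos : 0 < ‖z - l₀‖ := by
        have hw : z - (l₀ : ℂ) ≠ 0 := sub_ne_zero.mpr hz.1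
        exact norm_pos_iff.mpr hw
      have hden : 0 < ‖(s : ℂ) - z‖ := lt_of_lt_of_le (by positivity) hd1
      rw [norm_div, norm_mul, Complex.norm_real, Real.norm_eq_abs]
      rw [div_le_iff₀ hden]
      have hκn : |κ s| = ‖κ s‖ := rfl
      calc ‖z‖ * |κ s| ≤ (2 * ‖z - l₀‖) * |κ s| :=
            mul_le_mul_of_nonneg_right hd2 (abs_nonneg _)
        _ ≤ (2 / Real.sin ε) * ‖κ s‖ * ‖(s : ℂ) - z‖ := by
            rw [← hκn]
            rw [div_mul_eq_mul_div, div_mul_eq_mul_div, le_div_iff₀ hsin]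
            nlinarith [mul_le_mul_of_nonneg_left hd1 (mul_nonneg (by norm_num : (0:ℝ) ≤ 2) (abs_nonneg (κ s)))]
    · exact (hint.norm.const_mul _)
    · apply Eventually.of_forall
      intro s
      have hsz : ∀ᶠ z in L, (s : ℂ) - z ≠ 0 := by
        filter_upwards [habs (|s| + 1)] with z hb
        intro h
        have : z = (s : ℂ) := by linear_combination -h
        rw [this] at hb
        rw [Complex.norm_real, Real.norm_eq_abs] at hb
        linarith [le_abs_self s, neg_abs_le s]
      have hinv : Tendsto (fun z : ℂ => ((s : ℂ) - z)⁻¹) L (nhds 0) := by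
        apply tendsto_inv₀_cobounded.comp
        rw [← comap_norm_atTop]
        apply tendsto_comap_iff.mpr
        have : Tendsto (fun z : ℂ => ‖z‖ - ‖(s:ℂ)‖) L atTop := by
          apply tendsto_atTop_add_const_right
          rw [← hcomap] at *
          simpa using (tendsto_comap.mono_left inf_le_left : Tendsto (fun z : ℂ => ‖z‖) L atTop)
        apply tendsto_atTop_mono _ this
        intro z
        have h2 := norm_sub_norm_le (z : ℂ) ((s:ℂ))
        rw [norm_sub_rev] at h2
        simpa using h2
      have hmain : Tendsto (fun z : ℂ => (κ s : ℂ) * (-1 + (s : ℂ) * ((s:ℂ) - z)⁻¹)) L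
          (nhds (-(κ s : ℂ))) := by
        have : Tendsto (fun z : ℂ => -1 + (s : ℂ) * ((s:ℂ) - z)⁻¹) L (nhds (-1 + (s:ℂ) * 0)) :=
          tendsto_const_nhds.add (tendsto_const_nhds.mul hinv)
        simpa using tendsto_const_nhds.mul this
      apply hmain.congr'
      filter_upwards [hsz] with z hz
      field_simp
      ring
  -- z * F z → -I K
  have hzF : Tendsto (fun z : ℂ => z * F z) L (nhds (-Complex.I * K)) := by
    have h1 := hDCT.const_mul Complex.I
    have h2 : (∫ s in Set.Iic l₀, -(κ s : ℂ)) = -K := by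
      rw [integral_neg]
      congr 1
      exact integral_ofReal
    rw [h2] at h1
    have h3 : Complex.I * -K = -Complex.I * K := by ring
    rw [h3] at h1
    apply h1.congr
    intro z
    have h4 : ∫ s in Set.Iic l₀, z * (κ s : ℂ) / ((s : ℂ) - z)
        = z * ∫ s in Set.Iic l₀, (κ s : ℂ) / ((s : ℂ) - z) := by
      simp_rw [mul_div_assoc]
      rw [integral_const_mul]
    rw [h4, hFdef]
    ring
  -- F → 0
  have hF0 : Tendsto F L (nhds 0) := by
    have hinv : Tendsto (fun z : ℂ => z⁻¹) L (nhds 0) := tendsto_inv₀_cobounded.comp hLcobdd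
    have h5 := hinv.mul hzF
    rw [zero_mul] at h5
    apply h5.congr'
    filter_upwards [habs 1] with z hb
    have hz0 : z ≠ 0 := by
      intro h; rw [h] at hb; simp at hb; linarith
    rw [← mul_assoc, inv_mul_cancel₀ hz0, one_mul]
  -- little-o argument
  have hd : HasDerivAt Complex.exp 1 0 := by simpa using Complex.hasDerivAt_exp 0
  have ho : (fun w : ℂ => Complex.exp w - 1 - w) =o[nhds 0] (fun w : ℂ => w) := by
    have h6 := hasDerivAt_iff_isLittleO.mp hd
    simpa using h6
  have ho2 : (fun z : ℂ => Complex.exp (F z) - 1 - F z) =o[L] (fun z => F z) :=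
    ho.comp_tendsto hF0
  have ho3 : (fun z : ℂ => z * (Complex.exp (F z) - 1 - F z)) =o[L] (fun z => z * F z) :=
    (Asymptotics.isBigO_refl (fun z : ℂ => z) L).mul_isLittleO ho2
  have hbnd : (fun z : ℂ => z * F z) =O[L] (fun _ : ℂ => (1 : ℂ)) := hzF.isBigO_one ℂ
  have ho4 : Tendsto (fun z : ℂ => z * (Complex.exp (F z) - 1 - F z)) L (nhds 0) :=
    (Asymptotics.isLittleO_one_iff ℂ).mp (ho3.trans_isBigO hbnd)
  have hfinal := hzF.add ho4
  rw [add_zero] at hfinal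
  rw [show (∫ s in Set.Iic l₀, ((κ s : ℝ) : ℂ)) = K from integral_ofReal]
  apply hfinal.congr
  intro z
  unfold dnlsDelta
  simp only [hFdef, hκ]
  ring
end
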